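/- Let I ⊆ ℝ be an open interval und x,y,t,a,b : I → ℝ smooth with a² + b² = 1, let σ be the associated straight ruled surface patch with function η, and let σ̃(s,v) = (a(s)v, b(s)v, 0). Then the induced 1-forms satisfy ω_σ = η ds (i.e. A = η and B = 0 for σ) and ω_σ̃ = 2v²(a(s)ḃ(s) − b(s)ȧ(s)) ds (i.e. A = 2v²(aḃ − bȧ) and B = 0 for σ̃). Consequently, at every (s,v) with η(s,v) ≠ 0 one has ω_σ̃ = λ·ω_σ with λ(s,v) = 2v²(a(s)ḃ(s) − b(s)ȧ(s))/η(s,v); that is, every straight ruled surface is locally contactomorphic to the complex plane. -/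

import Mathlib

/-- Partial derivative in the first variable. -/
noncomputable def pu (f : ℝ × ℝ → ℝ) (p : ℝ × ℝ) : ℝ := deriv (fun u => f (u, p.2)) p.1

/-- Partial derivative in the second variable. -/
noncomputable def pv (f : ℝ × ℝ → ℝ) (p : ℝ × ℝ) : ℝ := deriv (fun v => f (p.1, v)) p.2

/-- Coefficient A of the induced 1-form ω_σ = A du + B dv, A = t_u + 2x y_u − 2y x_u. -/
noncomputable def Aform (x y t : ℝ × ℝ → ℝ) (p : ℝ × ℝ) : ℝ :=
  pu t p + 2 * x p * pu y p - 2 * y p * pu x p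

/-- Coefficient B of the induced 1-form ω_σ = A du + B dv, B = t_v + 2x y_v − 2y x_v. -/
noncomputable def Bform (x y t : ℝ × ℝ → ℝ) (p : ℝ × ℝ) : ℝ :=
  pv t p + 2 * x p * pv y p - 2 * y p * pv x p

/-- First component of the straight ruled surface patch. -/
def srX (x a : ℝ → ℝ) (p : ℝ × ℝ) : ℝ := x p.1 + p.2 * a p.1

/-- Second component of the straight ruled surface patch. -/
def srY (y b : ℝ → ℝ) (p : ℝ × ℝ) : ℝ := y p.1 + p.2 * b p.1

/-- Third component of the straight ruled surface patch. -/
def srT (x y t a b : ℝ → ℝ) (p : ℝ × ℝ) : ℝ :=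
  t p.1 + 2 * p.2 * (y p.1 * a p.1 - x p.1 * b p.1)

/-- The function η associated to a straight ruled surface patch. -/
noncomputable def eta (x y t a b : ℝ → ℝ) (p : ℝ × ℝ) : ℝ :=
  deriv t p.1 + 2 * (x p.1 * deriv y p.1 - y p.1 * deriv x p.1)
    + 4 * p.2 * (a p.1 * deriv y p.1 - b p.1 * deriv x p.1)
    + 2 * p.2 ^ 2 * (a p.1 * deriv b p.1 - b p.1 * deriv a p.1)

/-- ω_σ = η ds for a straight ruled surface patch σ, and for the plane patch
σ̃(s,v) = (a(s)v, b(s)v, 0) one has ω_σ̃ = 2v²(aḃ − bȧ) ds; hence wherever η ≠ 0,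
ω_σ̃ = λ·ω_σ with λ = 2v²(aḃ − bȧ)/η: every straight ruled surface is locally
contactomorphic to the complex plane. -/
theorem stmt_1 (I : Set ℝ) (hI : IsOpen I)
    (x y t a b : ℝ → ℝ)
    (hx : ContDiff ℝ (⊤ : ℕ∞) x) (hy : ContDiff ℝ (⊤ : ℕ∞) y) (ht : ContDiff ℝ (⊤ : ℕ∞) t)
    (ha : ContDiff ℝ (⊤ : ℕ∞) a) (hb : ContDiff ℝ (⊤ : ℕ∞) b)
    (hab : ∀ s ∈ I, a s ^ 2 + b s ^ 2 = 1) :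
    ∀ s ∈ I, ∀ v : ℝ,
      Aform (srX x a) (srY y b) (srT x y t a b) (s, v) = eta x y t a b (s, v) ∧
      Bform (srX x a) (srY y b) (srT x y t a b) (s, v) = 0 ∧
      Aform (fun p => a p.1 * p.2) (fun p => b p.1 * p.2) (fun _ => 0) (s, v)
        = 2 * v ^ 2 * (a s * deriv b s - b s * deriv a s) ∧
      Bform (fun p => a p.1 * p.2) (fun p => b p.1 * p.2) (fun _ => 0) (s, v) = 0 ∧
      (eta x y t a b (s, v) ≠ 0 →
        Aform (fun p => a p.1 * p.2) (fun p => b p.1 * p.2) (fun _ => 0) (s, v)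
          = (2 * v ^ 2 * (a s * deriv b s - b s * deriv a s) / eta x y t a b (s, v))
            * Aform (srX x a) (srY y b) (srT x y t a b) (s, v) ∧
        Bform (fun p => a p.1 * p.2) (fun p => b p.1 * p.2) (fun _ => 0) (s, v)
          = (2 * v ^ 2 * (a s * deriv b s - b s * deriv a s) / eta x y t a b (s, v))
            * Bform (srX x a) (srY y b) (srT x y t a b) (s, v)) := by

  intro s hs v
  have Hx : HasDerivAt x (deriv x s) s :=
    ((hx.differentiable (by simp)) s).hasDerivAt
  have Hy : HasDerivAt y (deriv y s) s :=
    ((hy.differentiable (by simp)) s).hasDerivAt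
  have Ht : HasDerivAt t (deriv t s) s :=
    ((ht.differentiable (by simp)) s).hasDerivAt
  have Ha : HasDerivAt a (deriv a s) s :=
    ((ha.differentiable (by simp)) s).hasDerivAt
  have Hb : HasDerivAt b (deriv b s) s :=
    ((hb.differentiable (by simp)) s).hasDerivAt
  -- partial derivatives of the ruled patch components
  have hXu : pu (srX x a) (s, v) = deriv x s + v * deriv a s := by
    have : HasDerivAt (fun u => x u + v * a u) (deriv x s + v * deriv a s) s :=
      Hx.add (Ha.const_mul v)
    simpa [pu, srX] using this.deriv
  have hYu : pu (srY y b) (s, v) = deriv y s + v * deriv b s := by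
    have : HasDerivAt (fun u => y u + v * b u) (deriv y s + v * deriv b s) s :=
      Hy.add (Hb.const_mul v)
    simpa [pu, srY] using this.deriv
  have hTu : pu (srT x y t a b) (s, v)
      = deriv t s + 2 * v * (deriv y s * a s + y s * deriv a s
        - (deriv x s * b s + x s * deriv b s)) := by
    have : HasDerivAt (fun u => t u + 2 * v * (y u * a u - x u * b u))
        (deriv t s + 2 * v * (deriv y s * a s + y s * deriv a s
          - (deriv x s * b s + x s * deriv b s))) s :=
      Ht.add (((Hy.mul Ha).sub (Hx.mul Hb)).const_mul (2 * v))
    simpa [pu, srT] using this.deriv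
  have hXv : pv (srX x a) (s, v) = a s := by
    have : HasDerivAt (fun w : ℝ => x s + w * a s) (1 * a s) v :=
      ((hasDerivAt_id v).mul_const (a s)).const_add (x s)
    simpa [pv, srX] using this.deriv
  have hYv : pv (srY y b) (s, v) = b s := by
    have : HasDerivAt (fun w : ℝ => y s + w * b s) (1 * b s) v :=
      ((hasDerivAt_id v).mul_const (b s)).const_add (y s)
    simpa [pv, srY] using this.deriv
  have hTv : pv (srT x y t a b) (s, v)
      = 2 * (y s * a s - x s * b s) := by
    have : HasDerivAt (fun w : ℝ => t s + 2 * w * (y s * a s - x s * b s))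
        (2 * 1 * (y s * a s - x s * b s)) v :=
      ((((hasDerivAt_id v).const_mul 2)).mul_const (y s * a s - x s * b s)).const_add (t s)
    simpa [pv, srT, mul_assoc] using this.deriv
  -- partial derivatives of the plane patch components
  have hau : pu (fun p : ℝ × ℝ => a p.1 * p.2) (s, v) = deriv a s * v := by
    have : HasDerivAt (fun u => a u * v) (deriv a s * v) s := Ha.mul_const v
    simpa [pu] using this.deriv
  have hbu : pu (fun p : ℝ × ℝ => b p.1 * p.2) (s, v) = deriv b s * v := by
    have : HasDerivAt (fun u => b u * v) (deriv b s * v) s := Hb.mul_const v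
    simpa [pu] using this.deriv
  have hav : pv (fun p : ℝ × ℝ => a p.1 * p.2) (s, v) = a s := by
    have : HasDerivAt (fun w : ℝ => a s * w) (a s * 1) v :=
      (hasDerivAt_id v).const_mul (a s)
    simpa [pv] using this.deriv
  have hbv : pv (fun p : ℝ × ℝ => b p.1 * p.2) (s, v) = b s := by
    have : HasDerivAt (fun w : ℝ => b s * w) (b s * 1) v :=
      (hasDerivAt_id v).const_mul (b s)
    simpa [pv] using this.deriv
  have hzu : pu (fun _ : ℝ × ℝ => (0 : ℝ)) (s, v) = 0 := by simp [pu]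
  have hzv : pv (fun _ : ℝ × ℝ => (0 : ℝ)) (s, v) = 0 := by simp [pv]
  have hA : Aform (srX x a) (srY y b) (srT x y t a b) (s, v) = eta x y t a b (s, v) := by
    simp only [Aform, hTu, hXu, hYu, srX, srY, eta]
    ring
  have hB : Bform (srX x a) (srY y b) (srT x y t a b) (s, v) = 0 := by
    simp only [Bform, hTv, hXv, hYv, srX, srY]
    ring
  have hA' : Aform (fun p => a p.1 * p.2) (fun p => b p.1 * p.2) (fun _ => 0) (s, v)
      = 2 * v ^ 2 * (a s * deriv b s - b s * deriv a s) := by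
    simp only [Aform, hzu, hau, hbu]
    ring
  have hB' : Bform (fun p => a p.1 * p.2) (fun p => b p.1 * p.2) (fun _ => 0) (s, v) = 0 := by
    simp only [Bform, hzv, hav, hbv]
    ring
  refine ⟨hA, hB, hA', hB', fun hne => ⟨?_, ?_⟩⟩
  · rw [hA', hA, div_mul_cancel₀ _ hne]
  · rw [hB', hB, mul_zero]
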